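/- A bilinear form Ω on the Lie superalgebra gl(1|1) is even, supersymmetric and ad-invariant if and only if there exist β, k ∈ ℝ such that Ω(T₁,T₁) = β, Ω(T₁,T₂) = Ω(T₂,T₁) = k, Ω(T₃,T₄) = k, Ω(T₄,T₃) = −k, and all other values of Ω on basis vectors are zero. Moreover, such a form is non-degenerate if and only if k ≠ 0; thus after the normalization k = 1 the most general non-degenerate ad-invariant supersymmetric metric on gl(1|1) is the one-parameter family Ω_β. -/

import Mathlib

noncomputable section

/-- The underlying supervector space `V = ℝ⁴`, with basis `T 0, T 1` even and `T 2, T 3` odd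
(corresponding to `T₁, T₂; T₃, T₄`). -/
abbrev V4 : Type := Fin 4 → ℝ

/-- The basis vectors `T₁, T₂, T₃, T₄` (zero-indexed). -/
def T (i : Fin 4) : V4 := Pi.single i 1

/-- The even subspace `span{T₁,T₂}`. -/
def spanEven : Submodule ℝ V4 := Submodule.span ℝ {T 0, T 1}

/-- The odd subspace `span{T₃,T₄}`. -/
def spanOdd : Submodule ℝ V4 := Submodule.span ℝ {T 2, T 3}

/-- The bracket of the Lie superalgebra `gl(1|1)`: `[T₁,T₃] = T₃`, `[T₃,T₁] = −T₃`, `[T₁,T₄] = −T₄`, `[T₄,T₁] = T₄`, `[T₃,T₄] = [T₄,T₃] = T₂`, all other brackets of basis vectors zero. -/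
def br (x y : V4) : V4 := ![0, x 2 * y 3 + x 3 * y 2, x 0 * y 2 - x 2 * y 0, -(x 0 * y 3) + x 3 * y 0]

/-- A bilinear form is even: it vanishes whenever exactly one argument lies in the even
subspace and the other in the odd subspace. -/
def IsEvenForm (Ω : V4 →ₗ[ℝ] V4 →ₗ[ℝ] ℝ) : Prop :=
  (∀ x ∈ spanEven, ∀ y ∈ spanOdd, Ω x y = 0) ∧
  (∀ x ∈ spanOdd, ∀ y ∈ spanEven, Ω x y = 0)

/-- A bilinear form is supersymmetric: symmetric on the even subspace and antisymmetric on
the odd subspace. -/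
def IsSuperSym (Ω : V4 →ₗ[ℝ] V4 →ₗ[ℝ] ℝ) : Prop :=
  (∀ x ∈ spanEven, ∀ y ∈ spanEven, Ω x y = Ω y x) ∧
  (∀ x ∈ spanOdd, ∀ y ∈ spanOdd, Ω x y = -Ω y x)

/-- Ad-invariance of a bilinear form with respect to the bracket of `gl(1|1)`:
`Ω([x,y],z) = Ω(x,[y,z])` for all `x, y, z`. -/
def IsAdInv (Ω : V4 →ₗ[ℝ] V4 →ₗ[ℝ] ℝ) : Prop :=
  ∀ x y z : V4, Ω (br x y) z = Ω x (br y z)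

/-- The matrix of values of the claimed general ad-invariant supersymmetric form:
`Ω(T₁,T₁) = β`, `Ω(T₁,T₂) = Ω(T₂,T₁) = k`, `Ω(T₃,T₄) = k`, `Ω(T₄,T₃) = −k`, all other
values on basis vectors zero. -/
def OmegaMat (β k : ℝ) : Matrix (Fin 4) (Fin 4) ℝ :=
  !![β, k, 0, 0; k, 0, 0, 0; 0, 0, 0, k; 0, 0, -k, 0]

/-! Write the form through its Gram matrix on the basis `T₁, …, T₄` (`T 0, …, T 3` here).
Evenness and supersymmetry make that matrix block diagonal, with a symmetric even block and an
antisymmetric odd block. Invariance then gives `Ω(T₂,T₂) = Ω([T₃,T₄],T₂) = Ω(T₃,[T₄,T₂]) = 0` and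
`Ω(T₃,T₄) = Ω([T₁,T₃],T₄) = Ω(T₁,[T₃,T₄]) = Ω(T₁,T₂)`, which leaves exactly `OmegaMat β k`.
Non-degeneracy is `det (OmegaMat β k) = -k⁴ ≠ 0`. -/

theorem LinearMap.eq_toLinearMap₂'_iff {R n : Type*} [CommSemiring R] [Fintype n] [DecidableEq n]
    (B : (n → R) →ₗ[R] (n → R) →ₗ[R] R) (M : Matrix n n R) :
    B = Matrix.toLinearMap₂' R M ↔ ∀ i j, B (Pi.single i 1) (Pi.single j 1) = M i j := by
  rw [← (Matrix.toLinearMap₂' R).symm_apply_eq, ← Matrix.ext_iff]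
  rfl

lemma Pi.apply_eq_zero_of_mem_span_single_pair {R n : Type*} [Semiring R] [DecidableEq n]
    {i j l : n} (hi : l ≠ i) (hj : l ≠ j) {x : n → R}
    (hx : x ∈ Submodule.span R {Pi.single i 1, Pi.single j 1}) : x l = 0 := by
  obtain ⟨a, b, rfl⟩ := Submodule.mem_span_pair.mp hx
  simp [hi, hj]

lemma toLinearMap₂'_omegaMat_apply (β k : ℝ) (x y : V4) :
    Matrix.toLinearMap₂' ℝ (OmegaMat β k) x y =
      β * x 0 * y 0 + k * (x 0 * y 1 + x 1 * y 0 + x 2 * y 3 - x 3 * y 2) := by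
  simp [Matrix.toLinearMap₂'_apply', OmegaMat, dotProduct, Matrix.mulVec, Fin.sum_univ_four]
  ring

lemma det_omegaMat (β k : ℝ) : (OmegaMat β k).det = -k ^ 4 := by
  simp [OmegaMat, Matrix.det_succ_row_zero, Fin.sum_univ_succ, Fin.succAbove]
  ring

lemma apply_eq_zero_of_mem_spanEven {x : V4} (hx : x ∈ spanEven) : x 2 = 0 ∧ x 3 = 0 :=
  ⟨Pi.apply_eq_zero_of_mem_span_single_pair (by decide) (by decide) hx,
    Pi.apply_eq_zero_of_mem_span_single_pair (by decide) (by decide) hx⟩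

lemma apply_eq_zero_of_mem_spanOdd {x : V4} (hx : x ∈ spanOdd) : x 0 = 0 ∧ x 1 = 0 :=
  ⟨Pi.apply_eq_zero_of_mem_span_single_pair (by decide) (by decide) hx,
    Pi.apply_eq_zero_of_mem_span_single_pair (by decide) (by decide) hx⟩

lemma T_mem_spanEven {i : Fin 4} (hi : i = 0 ∨ i = 1) : T i ∈ spanEven := by
  rcases hi with rfl | rfl
  exacts [Submodule.subset_span (by simp), Submodule.subset_span (by simp)]

lemma T_mem_spanOdd {i : Fin 4} (hi : i = 2 ∨ i = 3) : T i ∈ spanOdd := by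
  rcases hi with rfl | rfl
  exacts [Submodule.subset_span (by simp), Submodule.subset_span (by simp)]

lemma br_T_zero_T_two : br (T 0) (T 2) = T 2 := by
  ext j; fin_cases j <;> simp [br, T]

lemma br_T_two_T_three : br (T 2) (T 3) = T 1 := by
  ext j; fin_cases j <;> simp [br, T]

lemma br_T_three_T_one : br (T 3) (T 1) = 0 := by
  ext j; fin_cases j <;> simp [br, T]

section OmegaForm

variable (β k : ℝ)

lemma isEvenForm_omega : IsEvenForm (Matrix.toLinearMap₂' ℝ (OmegaMat β k)) := by
  constructor <;> intro x hx y hy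
  · obtain ⟨hx2, hx3⟩ := apply_eq_zero_of_mem_spanEven hx
    obtain ⟨hy0, hy1⟩ := apply_eq_zero_of_mem_spanOdd hy
    simp [toLinearMap₂'_omegaMat_apply, hx2, hx3, hy0, hy1]
  · obtain ⟨hx0, hx1⟩ := apply_eq_zero_of_mem_spanOdd hx
    obtain ⟨hy2, hy3⟩ := apply_eq_zero_of_mem_spanEven hy
    simp [toLinearMap₂'_omegaMat_apply, hx0, hx1, hy2, hy3]

lemma isSuperSym_omega : IsSuperSym (Matrix.toLinearMap₂' ℝ (OmegaMat β k)) := by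
  constructor <;> intro x hx y hy
  · obtain ⟨hx2, hx3⟩ := apply_eq_zero_of_mem_spanEven hx
    obtain ⟨hy2, hy3⟩ := apply_eq_zero_of_mem_spanEven hy
    simp only [toLinearMap₂'_omegaMat_apply, hx2, hx3, hy2, hy3]
    ring
  · obtain ⟨hx0, hx1⟩ := apply_eq_zero_of_mem_spanOdd hx
    obtain ⟨hy0, hy1⟩ := apply_eq_zero_of_mem_spanOdd hy
    simp only [toLinearMap₂'_omegaMat_apply, hx0, hx1, hy0, hy1]
    ring

lemma isAdInv_omega : IsAdInv (Matrix.toLinearMap₂' ℝ (OmegaMat β k)) := by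
  intro x y z
  simp only [toLinearMap₂'_omegaMat_apply, br, Matrix.cons_val]
  ring

end OmegaForm

lemma apply_T_eq_omegaMat {Ω : V4 →ₗ[ℝ] V4 →ₗ[ℝ] ℝ} (hE : IsEvenForm Ω) (hS : IsSuperSym Ω)
    (hA : IsAdInv Ω) (a b : Fin 4) :
    Ω (T a) (T b) = OmegaMat (Ω (T 0) (T 0)) (Ω (T 0) (T 1)) a b := by
  have even_odd {i j : Fin 4} (hi : i = 0 ∨ i = 1) (hj : j = 2 ∨ j = 3) :
      Ω (T i) (T j) = 0 ∧ Ω (T j) (T i) = 0 :=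
    ⟨hE.1 _ (T_mem_spanEven hi) _ (T_mem_spanOdd hj),
      hE.2 _ (T_mem_spanOdd hj) _ (T_mem_spanEven hi)⟩
  have odd_antisymm {i j : Fin 4} (hi : i = 2 ∨ i = 3) (hj : j = 2 ∨ j = 3) :
      Ω (T i) (T j) = -Ω (T j) (T i) :=
    hS.2 _ (T_mem_spanOdd hi) _ (T_mem_spanOdd hj)
  have h10 : Ω (T 1) (T 0) = Ω (T 0) (T 1) :=
    hS.1 _ (T_mem_spanEven (by simp)) _ (T_mem_spanEven (by simp))
  have h11 : Ω (T 1) (T 1) = 0 := by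
    simpa [br_T_two_T_three, br_T_three_T_one] using hA (T 2) (T 3) (T 1)
  have h23 : Ω (T 2) (T 3) = Ω (T 0) (T 1) := by
    simpa [br_T_zero_T_two, br_T_two_T_three] using hA (T 0) (T 2) (T 3)
  obtain ⟨h02, h20⟩ := even_odd (i := 0) (j := 2) (by simp) (by simp)
  obtain ⟨h03, h30⟩ := even_odd (i := 0) (j := 3) (by simp) (by simp)
  obtain ⟨h12, h21⟩ := even_odd (i := 1) (j := 2) (by simp) (by simp)
  obtain ⟨h13, h31⟩ := even_odd (i := 1) (j := 3) (by simp) (by simp)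
  have h22 := odd_antisymm (i := 2) (j := 2) (by simp) (by simp)
  have h33 := odd_antisymm (i := 3) (j := 3) (by simp) (by simp)
  have h32 := odd_antisymm (i := 3) (j := 2) (by simp) (by simp)
  fin_cases a <;> fin_cases b <;> simp [OmegaMat] <;> linarith

/-- A bilinear form `Ω` on the Lie superalgebra `gl(1|1)` is even, supersymmetric and ad-invariant
if and only if there exist `β, k ∈ ℝ` with `Ω(T₁,T₁) = β`, `Ω(T₁,T₂) = Ω(T₂,T₁) = k`,
`Ω(T₃,T₄) = k`, `Ω(T₄,T₃) = −k`, and all other values on basis vectors zero. Moreover, such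
a form is non-degenerate if and only if `k ≠ 0`. -/
theorem adInvariant_metric_gl11 (Ω : V4 →ₗ[ℝ] V4 →ₗ[ℝ] ℝ) :
    ((IsEvenForm Ω ∧ IsSuperSym Ω ∧ IsAdInv Ω) ↔
      ∃ β k : ℝ, ∀ a b : Fin 4, Ω (T a) (T b) = OmegaMat β k a b) ∧
    (∀ β k : ℝ, (∀ a b : Fin 4, Ω (T a) (T b) = OmegaMat β k a b) →
      ((∀ x : V4, (∀ y : V4, Ω x y = 0) → x = 0) ↔ k ≠ 0)) := by
  have eq_omega {β k : ℝ} (h : ∀ a b, Ω (T a) (T b) = OmegaMat β k a b) :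
      Ω = Matrix.toLinearMap₂' ℝ (OmegaMat β k) :=
    (LinearMap.eq_toLinearMap₂'_iff Ω _).mpr h
  refine ⟨⟨fun ⟨hE, hS, hA⟩ => ⟨_, _, apply_T_eq_omegaMat hE hS hA⟩, ?_⟩, ?_⟩
  · rintro ⟨β, k, h⟩
    rw [eq_omega h]
    exact ⟨isEvenForm_omega β k, isSuperSym_omega β k, isAdInv_omega β k⟩
  · intro β k h
    rw [eq_omega h]
    change LinearMap.SeparatingLeft _ ↔ _
    rw [LinearMap.separatingLeft_toLinearMap₂'_iff_det_ne_zero, det_omegaMat]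
    simp
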